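/- Let (P, W) be a PW-pair of real n×n matrices and let z*, s̄ ∈ ℝⁿ. Then the following are equivalent: (i) W s̄ = −P z*; (ii) s̄ belongs to the range of P and W s̄ + z* belongs to the orthogonal complement of the range of P (i.e. s̄ is a stationary point of the quadratic program min_s ½⟨s, W s⟩ + ⟨z*, s⟩ subject to s ∈ range P). -/

import Mathlib

/-!
Write `Q = I − P`. Transposing `W Q = Q` gives `Q W = Q`, so `Q (W s̄) = Q s̄`. If `W s̄ = −P z*`,
then `Q s̄ = −Q P z* = 0`, i.e. `s̄ ∈ range P`, and `P (W s̄ + z*) = −P z* + P z* = 0`. Conversely,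
from `Q s̄ = 0` and `P (W s̄) = −P z*` we get `W s̄ = P (W s̄) + Q (W s̄) = −P z* + Q s̄ = −P z*`.
Orthogonality of `W s̄ + z*` to `range P` is `P (W s̄ + z*) = 0`, since `P` is symmetric.
-/

open Matrix

/-- A PW-pair: symmetric matrices `P`, `W` with `P² = P` and `W(I−P) = I−P`. -/
def IsPWPair {n : ℕ} (P W : Matrix (Fin n) (Fin n) ℝ) : Prop :=
  P.IsSymm ∧ W.IsSymm ∧ P * P = P ∧ W * (1 - P) = 1 - P

section Projection

variable {ι R : Type*} [Fintype ι] [CommRing R]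

theorem Matrix.exists_eq_mulVec_iff_of_mul_self {P : Matrix ι ι R} (hPP : P * P = P)
    (s : ι → R) : (∃ p, s = P *ᵥ p) ↔ P *ᵥ s = s := by
  constructor
  · rintro ⟨p, rfl⟩
    rw [mulVec_mulVec, hPP]
  · exact fun h => ⟨s, h.symm⟩

theorem Matrix.forall_dotProduct_mulVec_eq_zero_iff_of_isSymm {P : Matrix ι ι R}
    (hP : P.IsSymm) (v : ι → R) : (∀ p, v ⬝ᵥ (P *ᵥ p) = 0) ↔ P *ᵥ v = 0 := by
  simp only [dotProduct_mulVec, ← mulVec_transpose, hP.eq]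
  exact dotProduct_eq_zero_iff

theorem Matrix.one_sub_mulVec_eq_zero_iff [DecidableEq ι] (P : Matrix ι ι R) (s : ι → R) :
    (1 - P) *ᵥ s = 0 ↔ P *ᵥ s = s := by
  rw [sub_mulVec, one_mulVec, sub_eq_zero, eq_comm]

end Projection

namespace IsPWPair

variable {n : ℕ} {P W : Matrix (Fin n) (Fin n) ℝ}

theorem one_sub_mul (h : IsPWPair P W) : (1 - P) * W = 1 - P := by
  obtain ⟨hP, hW, -, hWQ⟩ := h
  simpa [transpose_mul, transpose_sub, hP.eq, hW.eq] using congrArg transpose hWQ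

theorem one_sub_mulVec_mulVec (h : IsPWPair P W) (s : Fin n → ℝ) :
    (1 - P) *ᵥ (W *ᵥ s) = (1 - P) *ᵥ s := by
  rw [mulVec_mulVec, h.one_sub_mul]

theorem mulVec_eq_neg_mulVec_iff (h : IsPWPair P W) (z s : Fin n → ℝ) :
    W *ᵥ s = -(P *ᵥ z) ↔ P *ᵥ s = s ∧ P *ᵥ (W *ᵥ s + z) = 0 := by
  have hPP : P * P = P := h.2.2.1
  have hQP : (1 - P) * P = 0 := by rw [Matrix.sub_mul, Matrix.one_mul, hPP, sub_self]
  rw [← one_sub_mulVec_eq_zero_iff, ← h.one_sub_mulVec_mulVec, mulVec_add,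
    add_eq_zero_iff_eq_neg]
  constructor
  · intro hs
    rw [hs, mulVec_neg, mulVec_neg, mulVec_mulVec, mulVec_mulVec, hQP, hPP, zero_mulVec,
      neg_zero]
    exact ⟨rfl, rfl⟩
  · rintro ⟨hQs, hPWs⟩
    calc W *ᵥ s = P *ᵥ (W *ᵥ s) + (1 - P) *ᵥ (W *ᵥ s) := by
          rw [sub_mulVec, one_mulVec, add_sub_cancel]
      _ = -(P *ᵥ z) := by rw [hPWs, hQs, add_zero]

end IsPWPair

theorem stmt_7_general (n : ℕ)
    (P W : Matrix (Fin n) (Fin n) ℝ) (hPW : IsPWPair P W)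
    (zstar sbar : Fin n → ℝ) :
    W *ᵥ sbar = -(P *ᵥ zstar) ↔
      ((∃ p : Fin n → ℝ, sbar = P *ᵥ p) ∧
        ∀ p : Fin n → ℝ, (W *ᵥ sbar + zstar) ⬝ᵥ (P *ᵥ p) = 0) := by
  rw [hPW.mulVec_eq_neg_mulVec_iff]
  obtain ⟨hP, -, hPP, -⟩ := hPW
  rw [exists_eq_mulVec_iff_of_mul_self hPP, forall_dotProduct_mulVec_eq_zero_iff_of_isSymm hP]

/-- **Characterization of the Newton equation as stationarity of a quadratic program.**
For a PW-pair `(P,W)` and vectors `z*, s̄`: `W s̄ = −P z*` iff `s̄ ∈ range P` and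
`W s̄ + z*` is orthogonal to `range P` (i.e. `s̄` is a stationary point of
`min ½⟨s, Ws⟩ + ⟨z*, s⟩ s.t. s ∈ range P`). -/
theorem stmt_7 (n : ℕ) (hn : 1 ≤ n)
    (P W : Matrix (Fin n) (Fin n) ℝ) (hPW : IsPWPair P W)
    (zstar sbar : Fin n → ℝ) :
    W *ᵥ sbar = -(P *ᵥ zstar) ↔
      ((∃ p : Fin n → ℝ, sbar = P *ᵥ p) ∧
        ∀ p : Fin n → ℝ, (W *ᵥ sbar + zstar) ⬝ᵥ (P *ᵥ p) = 0) :=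
  stmt_7_general n P W hPW zstar sbar
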